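/- Suppose t ∈ {0,1,…,m} is such that for every nonempty u′ ⊆ {1,…,s} and every k′ ∈ ℕ₀^{|u′|} with 0 ≤ k′_j ≤ m for all j and Σ_{j∈u′} k′_j ≤ m − t, the matrix C_{u′,k′} has full row rank over F₂ (i.e., the digital net is a (t,m,s)-net in base 2). Then for every nonempty u ⊆ {1,…,s} and every k ∈ {0,1,…,m−1}^{|u|}, Γ_{u,k} ≤ 2^{t + |u| − 1}. -/

import Mathlib

open Finset

noncomputable section

/-- The bit vector `i⃗ ∈ F₂^m` of the integer `i = Σ_{ℓ=1}^m i_ℓ 2^{ℓ-1}`. -/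
def bvec (m : ℕ) (i : ℕ) : Fin m → ZMod 2 :=
  fun ℓ => if Nat.testBit i ℓ.1 then 1 else 0

/-- The `(r+1)`-st row (i.e. `r` with 0-indexing) of an `m × m` matrix over `F₂`,
as a vector in `F₂^m`; junk value `0` if `r ≥ m` (never used under the hypotheses below). -/
def rowAt (m : ℕ) (A : Matrix (Fin m) (Fin m) (ZMod 2)) (r : ℕ) : Fin m → ZMod 2 :=
  fun ℓ => if h : r < m then A ⟨r, h⟩ ℓ else 0

/-- The stacked matrix `C_{u,k}`: for each `j ∈ u`, the first `k j` rows of `C j`. -/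
def stack {m s : ℕ} (C : Fin s → Matrix (Fin m) (Fin m) (ZMod 2))
    (u : Finset (Fin s)) (k : Fin s → ℕ) :
    Matrix ((j : {x // x ∈ u}) × Fin (k j.1)) (Fin m) (ZMod 2) :=
  fun p => rowAt m (C p.1.1) p.2.1

/-- `∇C_{u,k}`: the matrix whose rows are the `(k j + 1)`-st rows (1-indexed) of `C j`, `j ∈ u`. -/
def grad {m s : ℕ} (C : Fin s → Matrix (Fin m) (Fin m) (ZMod 2))
    (u : Finset (Fin s)) (k : Fin s → ℕ) :
    Matrix {x // x ∈ u} (Fin m) (ZMod 2) :=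
  fun j => rowAt m (C j.1) (k j.1)

/-- The coordinate `x_{ij} ∈ [0,1)` of the digital net generated by `C₁,…,C_s`:
`x_{ij} = Σ_{ℓ=1}^m y_ℓ 2^{-ℓ}` where `y = C_j · i⃗` over `F₂`. -/
def pt {m s : ℕ} (C : Fin s → Matrix (Fin m) (Fin m) (ZMod 2)) (i : ℕ) (j : Fin s) : ℝ :=
  ∑ ℓ : Fin m, (((C j).mulVec (bvec m i) ℓ).val : ℝ) / 2 ^ (ℓ.1 + 1)

/-- The factor `N`: with `M(x,x') = max{k ∈ ℕ₀ : ⌊2^k x⌋ = ⌊2^k x'⌋}` (the number of matching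
leading binary digits), `Nf x x' c` equals `1` if `M(x,x') > c` (equivalently the first `c+1`
binary digits match), `-1` if `M(x,x') = c` (the first `c` digits match but not `c+1`), and
`0` if `M(x,x') < c`. -/
def Nf (x x' : ℝ) (c : ℕ) : ℤ :=
  if ⌊(2:ℝ) ^ (c + 1) * x⌋ = ⌊(2:ℝ) ^ (c + 1) * x'⌋ then 1
  else if ⌊(2:ℝ) ^ c * x⌋ = ⌊(2:ℝ) ^ c * x'⌋ then -1
  else 0

/-- The gain coefficient `Γ_{u,k} = 2^{-m} Σ_{i=0}^{2^m-1} Σ_{i'=0}^{2^m-1} ∏_{j∈u} N_{i,i',j}`. -/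
def Gam {m s : ℕ} (C : Fin s → Matrix (Fin m) (Fin m) (ZMod 2))
    (u : Finset (Fin s)) (k : Fin s → ℕ) : ℚ :=
  (2 ^ m : ℚ)⁻¹ * ∑ i ∈ Finset.range (2 ^ m), ∑ i' ∈ Finset.range (2 ^ m),
      ∏ j ∈ u, (Nf (pt C i j) (pt C i' j) (k j) : ℚ)

/-!
The `ℓ`-th binary digit of `x_{ij}` is `(row ℓ of C_j) · i⃗`, so the factor `N_{i,i',j}` depends
only on `w = i⃗ + i⃗'`: it vanishes unless the first `k_j` rows of `C_j` annihilate `w`, and is then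
`(-1)^{(row k_j of C_j) · w}`. Summing over `i` and `i'` gives
`Γ_{u,k} = Σ_{w ∈ ker C_{u,k}} (-1)^{D w}` with the linear form `D = Σ_{j ∈ u} (row k_j of C_j)`.

If `|k| + |u| ≤ m - t`, the net property makes `C_{u,k+1}` of full row rank, which produces
`w₀ ∈ ker C_{u,k}` with `D w₀ = 1`; translation by `w₀` flips every sign, so `Γ_{u,k} = 0`.
Otherwise pick `k' ≤ k` with `|k'| = min(|k|, m - t)`; then
`Γ_{u,k} ≤ |ker C_{u,k}| ≤ |ker C_{u,k'}| = 2^{m - |k'|} ≤ 2^{t + |u| - 1}`.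
-/

open Matrix

lemma neg_one_pow_val_add {R : Type*} [Ring R] (a b : ZMod 2) :
    (-1 : R) ^ (a + b).val = (-1) ^ a.val * (-1) ^ b.val := by
  rw [ZMod.val_add, ← neg_one_pow_eq_pow_mod_two, pow_add]

lemma prod_neg_one_pow_val {ι R : Type*} [CommRing R] (u : Finset ι) (f : ι → ZMod 2) :
    ∏ j ∈ u, (-1 : R) ^ (f j).val = (-1) ^ (∑ j ∈ u, f j).val := by
  induction u using Finset.cons_induction with
  | empty => simp
  | cons a u ha ih => rw [prod_cons, sum_cons, neg_one_pow_val_add, ih]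

lemma sum_eq_zero_of_add_eq_neg {G R : Type*} [AddGroup G] [Fintype G] [AddCommGroup R]
    [IsAddTorsionFree R] {f : G → R} (g₀ : G) (h : ∀ w, f (w + g₀) = -f w) : ∑ w, f w = 0 := by
  rw [← self_eq_neg, ← sum_neg_distrib, ← Equiv.sum_comp (Equiv.addRight g₀)]
  exact sum_congr rfl fun w _ => h w

lemma exists_le_sum_eq {ι : Type*} [DecidableEq ι] (u : Finset ι) (f : ι → ℕ) {T : ℕ}
    (hT : T ≤ ∑ j ∈ u, f j) : ∃ g : ι → ℕ, (∀ j ∈ u, g j ≤ f j) ∧ ∑ j ∈ u, g j = T := by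
  induction T with
  | zero => exact ⟨0, fun _ _ => Nat.zero_le _, by simp⟩
  | succ T ih =>
    obtain ⟨g, hgf, hgT⟩ := ih (by omega)
    obtain ⟨j₀, hj₀, hlt⟩ := exists_lt_of_sum_lt (hgT ▸ hT : ∑ j ∈ u, g j < ∑ j ∈ u, f j)
    refine ⟨Function.update g j₀ (g j₀ + 1), fun j hj => ?_, ?_⟩
    · rcases eq_or_ne j j₀ with rfl | hne
      · simpa using hlt
      · simpa [hne] using hgf j hj
    · rw [sum_update_of_mem hj₀, ← hgT, ← add_sum_erase u g hj₀, sdiff_singleton_eq_erase]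
      ring

section LinearAlgebra

variable {ι n K : Type*} [Fintype n] [Field K]

lemma mulVec_surjective_of_rank_eq_card [Fintype ι] (M : Matrix ι n K)
    (h : M.rank = Fintype.card ι) : Function.Surjective M.mulVec := by
  have htop : LinearMap.range M.mulVecLin = ⊤ := by
    apply Submodule.eq_top_of_finrank_eq
    rw [← Matrix.rank, h, Module.finrank_fintype_fun_eq_card]
  exact LinearMap.range_eq_top.mp htop

lemma natCard_mulVec_eq_zero [Fintype K] (M : Matrix ι n K) :
    Nat.card {w : n → K // M *ᵥ w = 0} = Fintype.card K ^ (Fintype.card n - M.rank) := by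
  classical
  have hdim := LinearMap.finrank_range_add_finrank_ker M.mulVecLin
  rw [← Matrix.rank, Module.finrank_fintype_fun_eq_card] at hdim
  rw [Nat.card_congr (Equiv.subtypeEquivRight fun w => by simp : _ ≃ LinearMap.ker M.mulVecLin),
    Nat.card_eq_fintype_card, Module.card_eq_pow_finrank (K := K)]
  congr 1
  omega

end LinearAlgebra

def binaryPrefix (d : ℕ → ZMod 2) : ℕ → ℕ
  | 0 => 0
  | c + 1 => 2 * binaryPrefix d c + (d c).val

def binaryFrac (m : ℕ) (d : ℕ → ZMod 2) : ℝ :=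
  ∑ ℓ : Fin m, ((d ℓ).val : ℝ) / 2 ^ (ℓ.1 + 1)

lemma binaryPrefix_add_div (d : ℕ → ZMod 2) (c e : ℕ) :
    binaryPrefix d (c + e) / 2 ^ e = binaryPrefix d c := by
  induction e with
  | zero => simp
  | succ e ih =>
    have hd := ZMod.val_lt (d (c + e))
    rw [← add_assoc, binaryPrefix, pow_succ', ← Nat.div_div_eq_div_mul, ← ih]
    congr 1
    omega

lemma binaryPrefix_eq_iff (d d' : ℕ → ZMod 2) (c : ℕ) :
    binaryPrefix d c = binaryPrefix d' c ↔ ∀ ℓ < c, d ℓ = d' ℓ := by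
  induction c with
  | zero => simp [binaryPrefix]
  | succ c ih =>
    have hd := ZMod.val_lt (d c)
    have hd' := ZMod.val_lt (d' c)
    rw [Nat.forall_lt_succ_right, ← ih, ← (ZMod.val_injective 2).eq_iff, binaryPrefix,
      binaryPrefix]
    omega

lemma binaryFrac_eq_binaryPrefix_div (m : ℕ) (d : ℕ → ZMod 2) :
    binaryFrac m d = binaryPrefix d m / 2 ^ m := by
  induction m with
  | zero => simp [binaryFrac, binaryPrefix]
  | succ m ih =>
    simp only [binaryFrac, Fin.sum_univ_castSucc, Fin.val_castSucc, Fin.val_last] at ih ⊢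
    rw [ih, binaryPrefix]
    push_cast
    field_simp
    ring

lemma floor_two_pow_mul_binaryFrac (d : ℕ → ZMod 2) {c m : ℕ} (hc : c ≤ m) :
    ⌊(2 : ℝ) ^ c * binaryFrac m d⌋ = binaryPrefix d c := by
  obtain ⟨e, rfl⟩ := Nat.exists_eq_add_of_le hc
  have h : (2 : ℝ) ^ c * binaryFrac (c + e) d = binaryPrefix d (c + e) / (2 ^ e : ℕ) := by
    rw [binaryFrac_eq_binaryPrefix_div, pow_add]
    push_cast
    field_simp
  rw [h, ← Int.natCast_floor_eq_floor (by positivity), Nat.floor_div_eq_div,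
    binaryPrefix_add_div]

lemma floor_two_pow_mul_binaryFrac_eq_iff (d d' : ℕ → ZMod 2) {c m : ℕ} (hc : c ≤ m) :
    ⌊(2 : ℝ) ^ c * binaryFrac m d⌋ = ⌊(2 : ℝ) ^ c * binaryFrac m d'⌋ ↔ ∀ ℓ < c, d ℓ = d' ℓ := by
  rw [floor_two_pow_mul_binaryFrac d hc, floor_two_pow_mul_binaryFrac d' hc, Nat.cast_inj,
    binaryPrefix_eq_iff]

lemma Nf_binaryFrac (d d' : ℕ → ZMod 2) {c m : ℕ} (hc : c < m) :
    (Nf (binaryFrac m d) (binaryFrac m d') c : ℚ) =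
      if ∀ ℓ < c, d ℓ = d' ℓ then (-1) ^ (d c + d' c).val else 0 := by
  simp only [Nf, floor_two_pow_mul_binaryFrac_eq_iff d d' hc,
    floor_two_pow_mul_binaryFrac_eq_iff d d' hc.le, Nat.forall_lt_succ_right]
  have h01 : ∀ x : ZMod 2, x = 0 ∨ x = 1 := by decide
  rcases h01 (d c) with h | h <;> rcases h01 (d' c) with h' | h' <;>
    split_ifs <;> simp_all <;> decide

lemma rowAt_val (m : ℕ) (A : Matrix (Fin m) (Fin m) (ZMod 2)) (ℓ : Fin m) :
    rowAt m A ℓ = A ℓ := by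
  ext
  simp [rowAt]

lemma pt_eq_binaryFrac {m s : ℕ} (C : Fin s → Matrix (Fin m) (Fin m) (ZMod 2)) (i : ℕ)
    (j : Fin s) : pt C i j = binaryFrac m (fun ℓ => rowAt m (C j) ℓ ⬝ᵥ bvec m i) := by
  simp only [pt, binaryFrac, Matrix.mulVec, rowAt_val]

lemma Nf_pt {m s : ℕ} (C : Fin s → Matrix (Fin m) (Fin m) (ZMod 2)) (i i' : ℕ) (j : Fin s)
    {c : ℕ} (hc : c < m) :
    (Nf (pt C i j) (pt C i' j) c : ℚ) =
      if ∀ r < c, rowAt m (C j) r ⬝ᵥ (bvec m i + bvec m i') = 0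
      then (-1) ^ (rowAt m (C j) c ⬝ᵥ (bvec m i + bvec m i')).val else 0 := by
  simp only [pt_eq_binaryFrac, Nf_binaryFrac _ _ hc, dotProduct_add, CharTwo.add_eq_zero]

lemma sum_range_two_pow_bvec {M : Type*} [AddCommMonoid M] (m : ℕ) (G : (Fin m → ZMod 2) → M) :
    ∑ i ∈ range (2 ^ m), G (bvec m i) = ∑ w, G w := by
  -- `ZMod 2` is `Fin 2` by definition, and `bvec m` inverts `finFunctionFinEquiv`
  have hbvec : ∀ f : Fin m → Fin 2, bvec m (finFunctionFinEquiv f) = f := by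
    intro f
    funext ℓ
    have h := finFunctionFinEquiv_symm_apply_val (finFunctionFinEquiv f) ℓ
    rw [Equiv.symm_apply_apply] at h
    simp only [bvec, Nat.testBit_eq_decide_div_mod_eq, ← h]
    generalize f ℓ = x
    fin_cases x <;> rfl
  rw [← Fin.sum_univ_eq_sum_range (fun i => G (bvec m i)),
    ← (finFunctionFinEquiv : (Fin m → Fin 2) ≃ Fin (2 ^ m)).sum_comp]
  exact Fintype.sum_congr _ _ fun f => congrArg G (hbvec f)

lemma sum_range_sum_range_bvec_add (m : ℕ) (G : (Fin m → ZMod 2) → ℚ) :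
    ∑ i ∈ range (2 ^ m), ∑ i' ∈ range (2 ^ m), G (bvec m i + bvec m i') = 2 ^ m * ∑ w, G w := by
  have inner (v : Fin m → ZMod 2) : ∑ i' ∈ range (2 ^ m), G (v + bvec m i') = ∑ w, G w :=
    (sum_range_two_pow_bvec m (fun v' => G (v + v'))).trans (Equiv.sum_comp (Equiv.addLeft v) G)
  simp only [inner, sum_const, card_range, nsmul_eq_mul, Nat.cast_pow, Nat.cast_ofNat]

section GainCoefficient

variable {m s : ℕ} (C : Fin s → Matrix (Fin m) (Fin m) (ZMod 2)) (u : Finset (Fin s))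

def gainTerm (k : Fin s → ℕ) (w : Fin m → ZMod 2) : ℚ :=
  if stack C u k *ᵥ w = 0 then (-1) ^ (∑ j ∈ u, rowAt m (C j) (k j) ⬝ᵥ w).val else 0

lemma stack_mulVec_eq_zero_iff (k : Fin s → ℕ) (w : Fin m → ZMod 2) :
    stack C u k *ᵥ w = 0 ↔ ∀ j ∈ u, ∀ r < k j, rowAt m (C j) r ⬝ᵥ w = 0 := by
  constructor
  · intro h j hj r hr
    exact congrFun h ⟨⟨j, hj⟩, ⟨r, hr⟩⟩
  · intro h
    funext p
    exact h p.1.1 p.1.2 p.2.1 p.2.2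

lemma Gam_eq_sum_gainTerm {k : Fin s → ℕ} (hk : ∀ j ∈ u, k j < m) :
    Gam C u k = ∑ w, gainTerm C u k w := by
  have hprod : ∀ i i', ∏ j ∈ u, (Nf (pt C i j) (pt C i' j) (k j) : ℚ) =
      gainTerm C u k (bvec m i + bvec m i') := by
    intro i i'
    rw [prod_congr rfl fun j hj => Nf_pt C i i' j (hk j hj), prod_ite_zero, prod_neg_one_pow_val]
    simp only [gainTerm, stack_mulVec_eq_zero_iff]
    congr
  simp only [Gam, hprod, sum_range_sum_range_bvec_add]
  field_simp

end GainCoefficient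

section GainBounds

variable {m s : ℕ} (C : Fin s → Matrix (Fin m) (Fin m) (ZMod 2)) {u : Finset (Fin s)}

lemma sum_gainTerm_eq_zero_of_rank_stack_succ {k : Fin s → ℕ}
    (hrank : (stack C u (k + 1)).rank = ∑ j ∈ u, (k j + 1)) (hu : u.Nonempty) :
    ∑ w, gainTerm C u k w = 0 := by
  obtain ⟨j₀, hj₀⟩ := hu
  have hcard : Fintype.card ((j : u) × Fin ((k + 1) j)) = ∑ j ∈ u, (k j + 1) := by
    simp only [Fintype.card_sigma, Fintype.card_fin, Pi.add_apply, Pi.one_apply]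
    exact sum_coe_sort u (fun j => k j + 1)
  -- full row rank of `C_{u,k+1}` lets us prescribe the rows `k j` independently
  obtain ⟨w₀, hw₀⟩ := mulVec_surjective_of_rank_eq_card _ (hrank.trans hcard.symm)
    fun p => if p.1.1 = j₀ ∧ p.2.1 = k p.1.1 then 1 else 0
  have hrow (j : Fin s) (hj : j ∈ u) (r : ℕ) (hr : r ≤ k j) :
      rowAt m (C j) r ⬝ᵥ w₀ = if j = j₀ ∧ r = k j then 1 else 0 :=
    congrFun hw₀ ⟨⟨j, hj⟩, ⟨r, Nat.lt_succ_of_le hr⟩⟩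
  have hker : stack C u k *ᵥ w₀ = 0 := by
    refine (stack_mulVec_eq_zero_iff C u k w₀).mpr fun j hj r hr => ?_
    rw [hrow j hj r hr.le, if_neg]
    exact fun h => hr.ne h.2
  have hsign : ∑ j ∈ u, rowAt m (C j) (k j) ⬝ᵥ w₀ = 1 := by
    rw [sum_congr rfl fun j hj => hrow j hj (k j) le_rfl]
    simp [hj₀]
  refine sum_eq_zero_of_add_eq_neg w₀ fun w => ?_
  simp only [gainTerm, mulVec_add, hker, add_zero, dotProduct_add, sum_add_distrib, hsign,
    neg_one_pow_val_add]
  split_ifs <;> simp [show (1 : ZMod 2).val = 1 from rfl]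

lemma sum_gainTerm_le {k k' : Fin s → ℕ} (hk' : ∀ j ∈ u, k' j ≤ k j) :
    ∑ w, gainTerm C u k w ≤ 2 ^ (m - (stack C u k').rank) := by
  have hterm (w : Fin m → ZMod 2) :
      gainTerm C u k w ≤ if stack C u k' *ᵥ w = 0 then 1 else 0 := by
    simp only [gainTerm, stack_mulVec_eq_zero_iff]
    split_ifs with h h'
    · rcases neg_one_pow_eq_or ℚ (∑ j ∈ u, rowAt m (C j) (k j) ⬝ᵥ w).val with h | h <;> simp [h]
    · exact absurd (fun j hj r hr => h j hj r (hr.trans_le (hk' j hj))) h'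
    · exact zero_le_one
    · exact le_rfl
  calc ∑ w, gainTerm C u k w ≤ ∑ w, if stack C u k' *ᵥ w = 0 then (1 : ℚ) else 0 :=
        sum_le_sum fun w _ => hterm w
    _ = Nat.card {w : Fin m → ZMod 2 // stack C u k' *ᵥ w = 0} := by
        rw [sum_boole, Nat.card_eq_fintype_card, Fintype.card_subtype]
    _ = 2 ^ (m - (stack C u k').rank) := by
        rw [natCard_mulVec_eq_zero]
        simp

end GainBounds

theorem statement_general (m s : ℕ) (hm : 1 ≤ m)
    (C : Fin s → Matrix (Fin m) (Fin m) (ZMod 2))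
    (t : ℕ)
    (hnet : ∀ u' : Finset (Fin s), u'.Nonempty → ∀ k' : Fin s → ℕ,
      (∀ j ∈ u', k' j ≤ m) → (∑ j ∈ u', k' j) ≤ m - t →
      (stack C u' k').rank = ∑ j ∈ u', k' j)
    (u : Finset (Fin s)) (hu : u.Nonempty)
    (k : Fin s → ℕ) (hk : ∀ j ∈ u, k j ≤ m - 1) :
    Gam C u k ≤ (2 : ℚ) ^ (t + u.card - 1) := by
  rw [Gam_eq_sum_gainTerm C u fun j hj => by have := hk j hj; omega]
  by_cases hsmall : ∑ j ∈ u, k j + u.card ≤ m - t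
  · have hrank := hnet u hu (k + 1) (fun j hj => by have := hk j hj; show k j + 1 ≤ m; omega)
      (by simpa [sum_add_distrib] using hsmall)
    rw [sum_gainTerm_eq_zero_of_rank_stack_succ C hrank hu]
    positivity
  · obtain ⟨k', hk'k, hk'sum⟩ :=
      exists_le_sum_eq u k (min_le_left (∑ j ∈ u, k j) (m - t))
    have hrank := hnet u hu k' (fun j hj => by have := hk'k j hj; have := hk j hj; omega)
      (hk'sum.trans_le (min_le_right _ _))
    have hu_card := card_pos.mpr hu
    calc ∑ w, gainTerm C u k w ≤ 2 ^ (m - (stack C u k').rank) := sum_gainTerm_le C hk'k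
      _ ≤ 2 ^ (t + u.card - 1) := pow_le_pow_right₀ one_le_two (by omega)

theorem statement (m s : ℕ) (hm : 1 ≤ m) (hs : 1 ≤ s)
    (C : Fin s → Matrix (Fin m) (Fin m) (ZMod 2))
    (t : ℕ) (htm : t ≤ m)
    (hnet : ∀ u' : Finset (Fin s), u'.Nonempty → ∀ k' : Fin s → ℕ,
      (∀ j ∈ u', k' j ≤ m) → (∑ j ∈ u', k' j) ≤ m - t →
      (stack C u' k').rank = ∑ j ∈ u', k' j)
    (u : Finset (Fin s)) (hu : u.Nonempty)
    (k : Fin s → ℕ) (hk : ∀ j ∈ u, k j ≤ m - 1) :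
    Gam C u k ≤ (2 : ℚ) ^ (t + u.card - 1) :=
  statement_general m s hm C t hnet u hu k hk

end
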